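/- For d = 4 and the matrix M(k) = S(k) - S(k)ᵀ where S(k) is the scattering matrix with entries S_{i,j}(k) = ((1-η²)/(1-η⁴))·(-η·(1-η²)/(1-η²)·δ_{i,j} + (1-δ_{i,j})·η^{(j-i-1) mod 4}) with η = (1-k)/(1+k), the operator norm of M(k) equals 4k/(1+k²), and this attains its maximal value 2 at k = 1. -/

import Mathlib

/-!
Off the diagonal `S` is `c η^((j - i - 1) mod 4)` with `c = (1 - η²)/(1 - η⁴)`, and the diagonal
cancels in `S - Sᵀ`; hence `S - Sᵀ = c (1 - η²) J`, where `J = P - Pᵀ` is the skew part of the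
cyclic shift `P`. Since `(Jᴴ J)² = 4 Jᴴ J`, the C⋆-identity gives `‖J‖ = 2`, and for
`η = (1 - k)/(1 + k)` the coefficient `c (1 - η²) = (1 - η²)/(1 + η²)` equals `2k/(1 + k²)`.
-/

open Matrix

theorem CStarRing.norm_sq_eq_of_star_mul_self_mul_self {𝕜 E : Type*} [NormedField 𝕜]
    [NormedRing E] [StarRing E] [CStarRing E] [NormedSpace 𝕜 E] {a : E} (ha : a ≠ 0) {c : 𝕜}
    (h : star a * a * (star a * a) = c • (star a * a)) : ‖a‖ ^ 2 = ‖c‖ := by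
  have key := congrArg norm h
  rw [(IsSelfAdjoint.star_mul_self a).norm_mul_self, norm_smul, CStarRing.norm_star_mul_self,
    ← sq] at key
  have : ‖a‖ ^ 2 ≠ 0 := by positivity
  exact mul_right_cancel₀ this (by linear_combination key)

noncomputable def scatteringMatrix (η : ℂ) : Matrix (Fin 4) (Fin 4) ℂ := fun i j =>
  ((1 - η ^ 2) / (1 - η ^ 4)) *
    (-η * ((1 - η ^ 2) / (1 - η ^ 2)) * (if i = j then 1 else 0) +
      (1 - (if i = j then 1 else 0)) * η ^ ((j - i - 1 : Fin 4) : ℕ))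

def skewCycleMatrix : Matrix (Fin 4) (Fin 4) ℂ :=
  !![0, 1, 0, -1; -1, 0, 1, 0; 0, -1, 0, 1; 1, 0, -1, 0]

theorem scatteringMatrix_sub_transpose (η : ℂ) :
    scatteringMatrix η - (scatteringMatrix η)ᵀ =
      ((1 - η ^ 2) / (1 - η ^ 4) * (1 - η ^ 2)) • skewCycleMatrix := by
  ext i j
  fin_cases i <;> fin_cases j <;>
    simp [scatteringMatrix, skewCycleMatrix, show ((-1 - 1 : Fin 4) : ℕ) = 2 from rfl,
        show ((-2 - 1 : Fin 4) : ℕ) = 1 from rfl, show ((-3 - 1 : Fin 4) : ℕ) = 0 from rfl] <;>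
    ring

theorem skewCycleMatrix_conjTranspose_mul_self_sq :
    skewCycleMatrixᴴ * skewCycleMatrix * (skewCycleMatrixᴴ * skewCycleMatrix) =
      (4 : ℂ) • (skewCycleMatrixᴴ * skewCycleMatrix) := by
  ext i j
  fin_cases i <;> fin_cases j <;>
    simp [skewCycleMatrix, Matrix.mul_apply, Fin.sum_univ_four] <;> norm_num

theorem norm_toEuclideanCLM_skewCycleMatrix :
    ‖toEuclideanCLM (𝕜 := ℂ) skewCycleMatrix‖ = 2 := by
  have hne : toEuclideanCLM (𝕜 := ℂ) skewCycleMatrix ≠ 0 := by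
    refine (map_ne_zero_iff _ (EquivLike.injective _)).mpr fun h => ?_
    simpa [skewCycleMatrix] using congrFun (congrFun h 0) 1
  have h := CStarRing.norm_sq_eq_of_star_mul_self_mul_self hne (c := (4 : ℂ)) (by
    rw [← map_star, ← map_mul, ← map_mul, star_eq_conjTranspose,
      skewCycleMatrix_conjTranspose_mul_self_sq, map_smul])
  rw [← sq_eq_sq₀ (norm_nonneg _) zero_le_two, h]
  norm_num

theorem sq_one_sub_sq_div_one_sub_pow_four_of_cayley {k η : ℝ} (hk : 0 < k)
    (hη : η = (1 - k) / (1 + k)) : (1 - η ^ 2) ^ 2 / (1 - η ^ 4) = 2 * k / (1 + k ^ 2) := by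
  have h1 : 1 - η ^ 2 = 4 * k / (1 + k) ^ 2 := by rw [hη]; field_simp; ring
  have h2 : 1 - η ^ 4 = 8 * k * (1 + k ^ 2) / (1 + k) ^ 4 := by rw [hη]; field_simp; ring
  rw [h1, h2]
  field_simp
  ring

/-- For d = 4, with η = (1-k)/(1+k) and S(k) the 4×4 preferred-orientation
scattering matrix, the operator norm of M(k) = S(k) - S(k)ᵀ equals 4k/(1+k²), which is
at most 2 for all k > 0 and attains the value 2 at k = 1. -/
theorem stmt_5 (k : ℝ) (hk : 0 < k) (η : ℝ) (hη : η = (1 - k) / (1 + k))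
    (S : Matrix (Fin 4) (Fin 4) ℂ)
    (hS : ∀ i j : Fin 4, S i j =
      ((1 - (η : ℂ) ^ 2) / (1 - (η : ℂ) ^ 4)) *
        (-(η : ℂ) * ((1 - (η : ℂ) ^ 2) / (1 - (η : ℂ) ^ 2)) * (if i = j then 1 else 0) +
          (1 - (if i = j then 1 else 0)) * (η : ℂ) ^ ((j - i - 1 : Fin 4) : ℕ))) :
    ‖Matrix.toEuclideanCLM (𝕜 := ℂ) (S - Sᵀ)‖ = 4 * k / (1 + k ^ 2) ∧
    4 * k / (1 + k ^ 2) ≤ 2 ∧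
    (k = 1 → ‖Matrix.toEuclideanCLM (𝕜 := ℂ) (S - Sᵀ)‖ = 2) := by
  have hM : S - Sᵀ = ((2 * k / (1 + k ^ 2) : ℝ) : ℂ) • skewCycleMatrix := by
    rw [show S = scatteringMatrix η from Matrix.ext hS, scatteringMatrix_sub_transpose,
      ← sq_one_sub_sq_div_one_sub_pow_four_of_cayley hk hη]
    congr 1
    push_cast
    ring
  have hnorm : ‖toEuclideanCLM (𝕜 := ℂ) (S - Sᵀ)‖ = 4 * k / (1 + k ^ 2) := by
    rw [hM, map_smul, norm_smul, norm_toEuclideanCLM_skewCycleMatrix, Complex.norm_real,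
      Real.norm_of_nonneg (by positivity)]
    ring
  refine ⟨hnorm, ?_, fun hk1 => by rw [hnorm, hk1]; norm_num⟩
  rw [div_le_iff₀ (by positivity)]
  nlinarith [sq_nonneg (k - 1)]
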